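/- arXiv:2203.13914 — 2 statements merged into one kernel-verified Lean document; each statement's English description precedes it below -/
import Mathlib

section
/- If L is an n-form-valued Lagrangian on an n-dimensional manifold whose variation decomposes as δL = E·δφ + dΘ(φ,δφ), and the Noether current is defined as J = Θ(φ, L_V φ) − i_V L − α_V where the diffeomorphism variation of L satisfies L(L_V φ) = L_V L(φ) + dα_V, then dJ = −E·(L_V φ); in particular J is a closed (n−1)-form whenever the equations of motion E = 0 hold. -/
/-- **Closedness of the Noether current.**  Abstract formulation in terms of spaces of
`(n−1)`-forms `Ωn1`, `n`-forms `Ωn`, and `(n+1)`-forms `Ωnp1` with exterior derivatives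
`d1 : Ωn1 → Ωn` and `dn : Ωn → Ωnp1` and interior product `iV` with the vector field `V`.
`Lform` is the Lagrangian `n`-form `L(φ)`, `δL` its variation under `δφ = L_V φ`,
`Eterm = E·(L_V φ)`, `ΘLV = Θ(φ, L_V φ)`, `iVL = i_V L`, and `LVL = L_V L`.
Hypotheses: the decomposition `δL = E δφ + dΘ`; diffeomorphism covariance up to a boundary
term, `δL = L_V L + dα_V`; `dL = 0` since `L` has top degree; and Cartan's formula
`L_V L = i_V dL + d(i_V L)`.  Conclusion: the Noether current
`J = Θ(φ, L_V φ) − i_V L − α_V` satisfies `dJ = −E·(L_V φ)`; in particular `J` is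
closed when the equations of motion `E = 0` hold. -/
theorem noether_current_closed
    {Ωn1 Ωn Ωnp1 : Type*} [AddCommGroup Ωn1] [AddCommGroup Ωn] [AddCommGroup Ωnp1]
    (d1 : Ωn1 →+ Ωn) (dn : Ωn →+ Ωnp1) (iV : Ωnp1 →+ Ωn)
    (Lform δL Eterm LVL : Ωn) (ΘLV iVL αV : Ωn1)
    (hdecomp : δL = Eterm + d1 ΘLV)
    (hdiffeo : δL = LVL + d1 αV)
    (htop : dn Lform = 0)
    (hCartan : LVL = iV (dn Lform) + d1 iVL) :
    d1 (ΘLV - iVL - αV) = -Eterm ∧ (Eterm = 0 → d1 (ΘLV - iVL - αV) = 0) := by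
  have h : d1 (ΘLV - iVL - αV) = -Eterm := by
    have hL : LVL = d1 iVL := by simpa [htop] using hCartan
    have := hdecomp.symm.trans hdiffeo
    rw [hL] at this
    simp only [map_sub]
    have hE : Eterm = d1 iVL + d1 αV - d1 ΘLV := by
      rw [eq_sub_iff_add_eq]; exact this
    rw [hE]; abel
  exact ⟨h, fun hE => by simp [h, hE]⟩
end

section
/- Let Λ_R be defined by Λ_{Ra}{}^{cbd} = ¼(−g^{bc}δ^d_a + g^{cd}δ^b_a). Then Λ_R is antisymmetric in its last two indices b,d, and for a torsion-free, curvature-free connection with disformation L (so that ∇ = D + L with D Levi-Civita), the identity 4(1/√(−g))∇_d(√(−g) Λ_{Ra}{}^{cbd}) = Q_a{}^{bc} − ½ Q_a g^{bc} + (½ Q^c − Q̃^c) δ^b_a holds, where Q_a = g^{bc}Q_{abc} and Q̃^c = Q_b{}^{bc}. -/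
/-! Both `√(−g)` and `g^{bc}` have covariant derivatives given by the non-metricity:
`∇_d √(−g) = ½ √(−g) Q_d`, and `∇_d g^{bc} = −Q_d{}^{bc}`, the latter because
`∂g⁻¹ = −g⁻¹ (∂g) g⁻¹`. Since `∇` obeys the Leibniz rule and `∇δ = 0`,
`∇_d(√(−g) Λ_a{}^{cbd}) = (∇_d √(−g)) Λ_a{}^{cbd} + ¼ √(−g) (−∇_d g^{bc} δ^d_a + ∇_d g^{cd} δ^b_a)`,
and contracting the Kronecker deltas gives the identity, with `Q_d{}^{cd} = Q̃^c`. -/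

noncomputable section

open scoped BigOperators

/-- Partial derivative of a scalar field on coordinate space along coordinate `i`. -/
def pd {n : ℕ} (i : Fin n) (f : (Fin n → ℝ) → ℝ) (x : Fin n → ℝ) : ℝ :=
  fderiv ℝ f x (Pi.single i 1)

/-- Non-metricity `Q_{abc} = ∇_a g_{bc}` of the connection `Γ^a_{bc}` (components
`Γ a b c`, with `b` the derivative index). -/
def nonmetQ {n : ℕ} (g : Fin n → Fin n → (Fin n → ℝ) → ℝ)
    (Γ : Fin n → Fin n → Fin n → (Fin n → ℝ) → ℝ) (a b c : Fin n) (x : Fin n → ℝ) : ℝ :=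
  pd a (g b c) x - ∑ d, Γ d a b x * g d c x - ∑ d, Γ d a c x * g b d x

/-- Torsion `T^a_{bc} = 2Γ^a_{[bc]} = Γ^a_{bc} − Γ^a_{cb}`. -/
def torsion {n : ℕ} (Γ : Fin n → Fin n → Fin n → (Fin n → ℝ) → ℝ)
    (a b c : Fin n) (x : Fin n → ℝ) : ℝ :=
  Γ a b c x - Γ a c b x

/-- Christoffel symbols (Levi-Civita connection) of the metric `g` with inverse `ginv`. -/
def christoffel {n : ℕ} (g ginv : Fin n → Fin n → (Fin n → ℝ) → ℝ)
    (a b c : Fin n) (x : Fin n → ℝ) : ℝ :=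
  (1 / 2) * ∑ d, ginv a d x * (pd b (g d c) x + pd c (g d b) x - pd d (g b c) x)

/-- Riemann curvature `R^a_{bcd} = 2∂_{[c}Γ^a_{d]b} + 2Γ^a_{[c|e|}Γ^e_{d]b}`. -/
def riem {n : ℕ} (Γ : Fin n → Fin n → Fin n → (Fin n → ℝ) → ℝ)
    (a b c d : Fin n) (x : Fin n → ℝ) : ℝ :=
  pd c (Γ a d b) x - pd d (Γ a c b) x
    + ∑ e, (Γ a c e x * Γ e d b x - Γ a d e x * Γ e c b x)

/-- Kronecker delta. -/
def kron {n : ℕ} (a b : Fin n) : ℝ := if a = b then 1 else 0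

/-- First trace of the non-metricity, `Q_a = Q_{ab}{}^b = g^{bc} Q_{abc}`. -/
def qTr {n : ℕ} (g ginv : Fin n → Fin n → (Fin n → ℝ) → ℝ)
    (Γ : Fin n → Fin n → Fin n → (Fin n → ℝ) → ℝ) (a : Fin n) (x : Fin n → ℝ) : ℝ :=
  ∑ b, ∑ c, ginv b c x * nonmetQ g Γ a b c x

/-- Second trace of the non-metricity, `Q̃_a = Q^b{}_{ba} = g^{bc} Q_{cba}`. -/
def qTil {n : ℕ} (g ginv : Fin n → Fin n → (Fin n → ℝ) → ℝ)
    (Γ : Fin n → Fin n → Fin n → (Fin n → ℝ) → ℝ) (a : Fin n) (x : Fin n → ℝ) : ℝ :=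
  ∑ b, ∑ c, ginv b c x * nonmetQ g Γ c b a x

/-- Raised first trace `Q^a = g^{ae} Q_e`. -/
def qTrUp {n : ℕ} (g ginv : Fin n → Fin n → (Fin n → ℝ) → ℝ)
    (Γ : Fin n → Fin n → Fin n → (Fin n → ℝ) → ℝ) (a : Fin n) (x : Fin n → ℝ) : ℝ :=
  ∑ e, ginv a e x * qTr g ginv Γ e x

/-- Raised second trace `Q̃^a = g^{ae} Q̃_e`. -/
def qTilUp {n : ℕ} (g ginv : Fin n → Fin n → (Fin n → ℝ) → ℝ)
    (Γ : Fin n → Fin n → Fin n → (Fin n → ℝ) → ℝ) (a : Fin n) (x : Fin n → ℝ) : ℝ :=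
  ∑ e, ginv a e x * qTil g ginv Γ e x

/-- `Q_a{}^{bc} = g^{be} g^{cf} Q_{aef}`. -/
def qDU {n : ℕ} (g ginv : Fin n → Fin n → (Fin n → ℝ) → ℝ)
    (Γ : Fin n → Fin n → Fin n → (Fin n → ℝ) → ℝ) (a b c : Fin n) (x : Fin n → ℝ) : ℝ :=
  ∑ e, ∑ f, ginv b e x * ginv c f x * nonmetQ g Γ a e f x

/-- `Q^{bc}{}_a = g^{be} g^{cf} Q_{efa}`. -/
def qUD {n : ℕ} (g ginv : Fin n → Fin n → (Fin n → ℝ) → ℝ)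
    (Γ : Fin n → Fin n → Fin n → (Fin n → ℝ) → ℝ) (b c a : Fin n) (x : Fin n → ℝ) : ℝ :=
  ∑ e, ∑ f, ginv b e x * ginv c f x * nonmetQ g Γ e f a x

/-- The tensor `Λ_{Ra}{}^{cbd} = ¼(−g^{bc} δ^d_a + g^{cd} δ^b_a)`. -/
def lamR {n : ℕ} (ginv : Fin n → Fin n → (Fin n → ℝ) → ℝ)
    (a c b d : Fin n) (x : Fin n → ℝ) : ℝ :=
  (1 / 4) * (-(ginv b c x) * kron d a + ginv c d x * kron b a)

/-- The covariant divergence `∑_d ∇_d (√(−g) Λ_{Ra}{}^{cbd})` of the weight `−1`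
tensor density `λ_{Ra}{}^{cbd} = √(−g) Λ_{Ra}{}^{cbd}`:
`∇_d λ_a{}^{cbd} = ∂_d λ_a{}^{cbd} + Γ^c_{de} λ_a{}^{ebd} + Γ^b_{de} λ_a{}^{ced}
  + Γ^d_{de} λ_a{}^{cbe} − Γ^e_{da} λ_e{}^{cbd} − Γ^e_{de} λ_a{}^{cbd}`. -/
def covDivLamR {n : ℕ} (ginv : Fin n → Fin n → (Fin n → ℝ) → ℝ)
    (Γ : Fin n → Fin n → Fin n → (Fin n → ℝ) → ℝ)
    (sg : (Fin n → ℝ) → ℝ) (a c b : Fin n) (x : Fin n → ℝ) : ℝ :=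
  ∑ d, (pd d (fun y => sg y * lamR ginv a c b d y) x
    + ∑ e, Γ c d e x * sg x * lamR ginv a e b d x
    + ∑ e, Γ b d e x * sg x * lamR ginv a c e d x
    + ∑ e, Γ d d e x * sg x * lamR ginv a c b e x
    - ∑ e, Γ e d a x * sg x * lamR ginv e c b d x
    - ∑ e, Γ e d e x * sg x * lamR ginv a c b d x)

open scoped Matrix

section PartialDerivative

variable {n : ℕ} {f h : (Fin n → ℝ) → ℝ} {x : Fin n → ℝ}

theorem pd_mul (hf : DifferentiableAt ℝ f x) (hh : DifferentiableAt ℝ h x) (i : Fin n) :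
    pd i (fun y => f y * h y) x = pd i f x * h x + f x * pd i h x := by
  simp only [pd, fderiv_fun_mul hf hh, add_apply, smul_apply, smul_eq_mul]
  ring

theorem pd_const (c : ℝ) (i : Fin n) : pd i (fun _ => c) x = 0 := by
  simp [pd]

theorem pd_sum {ι : Type*} [Fintype ι] {F : ι → (Fin n → ℝ) → ℝ}
    (hF : ∀ j, DifferentiableAt ℝ (F j) x) (i : Fin n) :
    pd i (fun y => ∑ j, F j y) x = ∑ j, pd i (F j) x := by
  simp [pd, fderiv_fun_sum fun j _ => hF j]

theorem pd_linear_combination (α β : ℝ) (hf : DifferentiableAt ℝ f x)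
    (hh : DifferentiableAt ℝ h x) (i : Fin n) :
    pd i (fun y => α * f y + β * h y) x = α * pd i f x + β * pd i h x := by
  simp [pd, fderiv_fun_add (hf.const_mul α) (hh.const_mul β), fderiv_const_mul hf,
    fderiv_const_mul hh]

end PartialDerivative

theorem sum_mul_kron {n : ℕ} (f : Fin n → ℝ) (a : Fin n) : ∑ d, f d * kron d a = f a := by
  simp [kron]

theorem sum_mul_kron' {n : ℕ} (f : Fin n → ℝ) (a : Fin n) : ∑ d, f d * kron a d = f a := by
  simp [kron]

namespace Matrix

variable {m R : Type*} [Fintype m] [DecidableEq m] [CommRing R] {H G G' C : Matrix m m R}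

theorem mul_sub_sub_mul_of_mul_eq_one (hHG : H * G = 1) (hGH : G * H = 1) :
    H * (G' - Cᵀ * G - G * C) * H = H * G' * H - H * Cᵀ - C * H := by
  simp only [Matrix.mul_sub, Matrix.sub_mul, Matrix.mul_assoc, hGH, Matrix.mul_one]
  rw [← Matrix.mul_assoc H G, hHG, Matrix.one_mul]

theorem trace_mul_transpose_sub_sub_of_mul_eq_one (hHG : H * G = 1) (hGH : G * H = 1)
    (hG : Gᵀ = G) : trace (H * (G' - Cᵀ * G - G * C)ᵀ) = trace (H * G'ᵀ) - 2 * trace C := by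
  have hHGC : trace (H * (G * C)) = trace C := by
    rw [← Matrix.mul_assoc, hHG, Matrix.one_mul]
  have hHCG : trace (H * (Cᵀ * G)) = trace C := by
    rw [← Matrix.mul_assoc, trace_mul_comm, ← Matrix.mul_assoc, hGH, Matrix.one_mul,
      trace_transpose]
  simp only [transpose_sub, transpose_mul, transpose_transpose, hG, Matrix.mul_sub, trace_sub,
    hHGC, hHCG]
  ring

end Matrix

section ComponentMatrices

variable {n : ℕ}

def matAt (A : Fin n → Fin n → (Fin n → ℝ) → ℝ) (x : Fin n → ℝ) : Matrix (Fin n) (Fin n) ℝ :=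
  Matrix.of fun i j => A i j x

def pdMat (d : Fin n) (A : Fin n → Fin n → (Fin n → ℝ) → ℝ) (x : Fin n → ℝ) :
    Matrix (Fin n) (Fin n) ℝ :=
  Matrix.of fun i j => pd d (A i j) x

def connMat (Γ : Fin n → Fin n → Fin n → (Fin n → ℝ) → ℝ) (d : Fin n) (x : Fin n → ℝ) :
    Matrix (Fin n) (Fin n) ℝ :=
  Matrix.of fun k e => Γ k d e x

def nonmetMat (g : Fin n → Fin n → (Fin n → ℝ) → ℝ) (Γ : Fin n → Fin n → Fin n → (Fin n → ℝ) → ℝ)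
    (d : Fin n) (x : Fin n → ℝ) : Matrix (Fin n) (Fin n) ℝ :=
  Matrix.of fun e f => nonmetQ g Γ d e f x

variable {g ginv : Fin n → Fin n → (Fin n → ℝ) → ℝ} (Γ : Fin n → Fin n → Fin n → (Fin n → ℝ) → ℝ)
  (x : Fin n → ℝ)

theorem transpose_matAt (hgsym : ∀ a b, g a b = g b a) : (matAt g x)ᵀ = matAt g x := by
  ext i j
  simp [matAt, hgsym i j]

theorem nonmetMat_eq (d : Fin n) :
    nonmetMat g Γ d x = pdMat d g x - (connMat Γ d x)ᵀ * matAt g x - matAt g x * connMat Γ d x := by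
  ext e f
  simp [nonmetMat, nonmetQ, pdMat, connMat, matAt, Matrix.mul_apply, mul_comm]

theorem qDU_eq (hginvsym : ∀ a b, ginv a b = ginv b a) (d b c : Fin n) :
    qDU g ginv Γ d b c x = (matAt ginv x * nonmetMat g Γ d x * matAt ginv x) b c := by
  simp only [qDU, Matrix.mul_apply, matAt, nonmetMat, Matrix.of_apply, Finset.sum_mul]
  rw [Finset.sum_comm]
  refine Finset.sum_congr rfl fun f _ => Finset.sum_congr rfl fun e _ => ?_
  rw [hginvsym c f]
  ring

theorem qTr_eq_trace (d : Fin n) :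
    qTr g ginv Γ d x = Matrix.trace (matAt ginv x * (nonmetMat g Γ d x)ᵀ) := by
  simp [qTr, Matrix.trace, Matrix.mul_apply, matAt, nonmetMat]

theorem matAt_ginv_mul (hinv : ∀ a b, ∑ c, ginv a c x * g c b x = if a = b then (1 : ℝ) else 0) :
    matAt ginv x * matAt g x = 1 := by
  ext a b
  simp [matAt, Matrix.mul_apply, hinv, Matrix.one_apply]

theorem matAt_mul_ginv (hinv : ∀ a b, ∑ c, ginv a c x * g c b x = if a = b then (1 : ℝ) else 0) :
    matAt g x * matAt ginv x = 1 :=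
  mul_eq_one_comm.mp (matAt_ginv_mul x hinv)

theorem pdMat_ginv_mul_add (d : Fin n)
    (hinv : ∀ (a b : Fin n) (y : Fin n → ℝ),
      ∑ c, ginv a c y * g c b y = if a = b then (1 : ℝ) else 0)
    (hgdiff : ∀ a b, DifferentiableAt ℝ (g a b) x)
    (hginvdiff : ∀ a b, DifferentiableAt ℝ (ginv a b) x) :
    pdMat d ginv x * matAt g x + matAt ginv x * pdMat d g x = 0 := by
  ext a b
  have hconst : pd d (fun y => ∑ c, ginv a c y * g c b y) x = 0 := by
    simp_rw [hinv a b]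
    exact pd_const _ d
  rw [pd_sum (F := fun c y => ginv a c y * g c b y)
    (fun c => (hginvdiff a c).mul (hgdiff c b))] at hconst
  simp only [pd_mul (hginvdiff a _) (hgdiff _ b)] at hconst
  simpa [pdMat, matAt, Matrix.mul_apply, Finset.sum_add_distrib] using hconst

theorem pdMat_ginv (d : Fin n)
    (hinv : ∀ (a b : Fin n) (y : Fin n → ℝ),
      ∑ c, ginv a c y * g c b y = if a = b then (1 : ℝ) else 0)
    (hgdiff : ∀ a b, DifferentiableAt ℝ (g a b) x)
    (hginvdiff : ∀ a b, DifferentiableAt ℝ (ginv a b) x) :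
    pdMat d ginv x = -(matAt ginv x * pdMat d g x * matAt ginv x) :=
  calc pdMat d ginv x = pdMat d ginv x * matAt g x * matAt ginv x := by
        rw [Matrix.mul_assoc, matAt_mul_ginv x (hinv · · x), Matrix.mul_one]
    _ = -(matAt ginv x * pdMat d g x * matAt ginv x) := by
        rw [eq_neg_of_add_eq_zero_left (pdMat_ginv_mul_add x d hinv hgdiff hginvdiff),
          Matrix.neg_mul]

end ComponentMatrices

/-- `∇_d g^{bc}`. -/
def covDerivGinv {n : ℕ} (ginv : Fin n → Fin n → (Fin n → ℝ) → ℝ)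
    (Γ : Fin n → Fin n → Fin n → (Fin n → ℝ) → ℝ) (d b c : Fin n) (x : Fin n → ℝ) : ℝ :=
  pd d (ginv b c) x + ∑ e, Γ b d e x * ginv e c x + ∑ e, Γ c d e x * ginv b e x

/-- `∇_d` of a scalar density of weight `−1`, such as `√(−g)`. -/
def covDerivDensity {n : ℕ} (Γ : Fin n → Fin n → Fin n → (Fin n → ℝ) → ℝ)
    (sg : (Fin n → ℝ) → ℝ) (d : Fin n) (x : Fin n → ℝ) : ℝ :=
  pd d sg x - (∑ e, Γ e d e x) * sg x

section CovariantDerivative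

variable {n : ℕ} {g ginv : Fin n → Fin n → (Fin n → ℝ) → ℝ}
  (Γ : Fin n → Fin n → Fin n → (Fin n → ℝ) → ℝ) (x : Fin n → ℝ)

theorem covDerivGinv_eq_neg_qDU (hginvsym : ∀ a b, ginv a b = ginv b a)
    (hinv : ∀ (a b : Fin n) (y : Fin n → ℝ),
      ∑ c, ginv a c y * g c b y = if a = b then (1 : ℝ) else 0)
    (hgdiff : ∀ a b, DifferentiableAt ℝ (g a b) x)
    (hginvdiff : ∀ a b, DifferentiableAt ℝ (ginv a b) x) (d b c : Fin n) :
    covDerivGinv ginv Γ d b c x = -qDU g ginv Γ d b c x := by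
  have hmat : Matrix.of (fun b c => covDerivGinv ginv Γ d b c x)
      = pdMat d ginv x + connMat Γ d x * matAt ginv x + matAt ginv x * (connMat Γ d x)ᵀ := by
    ext b c
    simp [covDerivGinv, pdMat, matAt, connMat, Matrix.mul_apply, mul_comm]
  rw [pdMat_ginv x d hinv hgdiff hginvdiff] at hmat
  rw [qDU_eq Γ x hginvsym, nonmetMat_eq, Matrix.mul_sub_sub_mul_of_mul_eq_one
    (matAt_ginv_mul x (hinv · · x)) (matAt_mul_ginv x (hinv · · x)),
    ← Matrix.of_apply (fun b c => covDerivGinv ginv Γ d b c x) b c, hmat]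
  simp only [Matrix.add_apply, Matrix.neg_apply, Matrix.sub_apply]
  ring

theorem covDerivDensity_eq (sg : (Fin n → ℝ) → ℝ) (d : Fin n) (hgsym : ∀ a b, g a b = g b a)
    (hinv : ∀ a b, ∑ c, ginv a c x * g c b x = if a = b then (1 : ℝ) else 0)
    (hsg : pd d sg x = (1 / 2) * sg x * ∑ b, ∑ c, ginv b c x * pd d (g b c) x) :
    covDerivDensity Γ sg d x = (1 / 2) * sg x * qTr g ginv Γ d x := by
  have hpd : ∑ b, ∑ c, ginv b c x * pd d (g b c) x
      = Matrix.trace (matAt ginv x * (pdMat d g x)ᵀ) := by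
    simp [Matrix.trace, Matrix.mul_apply, matAt, pdMat]
  have htrace : ∑ e, Γ e d e x = Matrix.trace (connMat Γ d x) := by
    simp [Matrix.trace, connMat]
  rw [covDerivDensity, qTr_eq_trace, nonmetMat_eq, hsg, hpd, htrace,
    Matrix.trace_mul_transpose_sub_sub_of_mul_eq_one (matAt_ginv_mul x hinv)
      (matAt_mul_ginv x hinv) (transpose_matAt x hgsym)]
  ring

end CovariantDerivative

section LambdaR

variable {n : ℕ} {ginv : Fin n → Fin n → (Fin n → ℝ) → ℝ} (v : Fin n → ℝ) (x : Fin n → ℝ)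

theorem lamR_antisymm (hginvsym : ∀ a b, ginv a b = ginv b a) (a c b d : Fin n) :
    lamR ginv a c b d x = -lamR ginv a c d b x := by
  simp only [lamR, hginvsym d c, hginvsym c b]
  ring

theorem sum_mul_lamR_first (c b d : Fin n) :
    ∑ e, v e * lamR ginv e c b d x = (1 / 4) * (-(v d) * ginv b c x + v b * ginv c d x) := by
  rw [← sum_mul_kron' v d, ← sum_mul_kron' v b]
  simp only [Finset.sum_mul, Finset.mul_sum, ← Finset.sum_neg_distrib, ← Finset.sum_add_distrib]
  exact Finset.sum_congr rfl fun e _ => by unfold lamR; ring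

theorem sum_mul_lamR_second (a b d : Fin n) :
    ∑ e, v e * lamR ginv a e b d x
      = (1 / 4) * (-(∑ e, v e * ginv b e x) * kron d a + (∑ e, v e * ginv e d x) * kron b a) := by
  simp only [Finset.sum_mul, Finset.mul_sum, ← Finset.sum_neg_distrib, ← Finset.sum_add_distrib]
  exact Finset.sum_congr rfl fun e _ => by unfold lamR; ring

theorem sum_mul_lamR_third (a c d : Fin n) :
    ∑ e, v e * lamR ginv a c e d x
      = (1 / 4) * (-(∑ e, v e * ginv e c x) * kron d a + v a * ginv c d x) := by
  rw [← sum_mul_kron v a]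
  simp only [Finset.sum_mul, Finset.mul_sum, ← Finset.sum_neg_distrib, ← Finset.sum_add_distrib]
  exact Finset.sum_congr rfl fun e _ => by unfold lamR; ring

theorem sum_mul_lamR_fourth (a c b : Fin n) :
    ∑ e, v e * lamR ginv a c b e x
      = (1 / 4) * (-(v a) * ginv b c x + (∑ e, v e * ginv c e x) * kron b a) := by
  rw [← sum_mul_kron v a]
  simp only [Finset.sum_mul, Finset.mul_sum, ← Finset.sum_neg_distrib, ← Finset.sum_add_distrib]
  exact Finset.sum_congr rfl fun e _ => by unfold lamR; ring

variable {x}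

theorem differentiableAt_lamR (hginvdiff : ∀ a b, DifferentiableAt ℝ (ginv a b) x)
    (a c b d : Fin n) : DifferentiableAt ℝ (lamR ginv a c b d) x := by
  unfold lamR
  fun_prop

theorem pd_lamR (hginvdiff : ∀ a b, DifferentiableAt ℝ (ginv a b) x) (a c b d i : Fin n) :
    pd i (lamR ginv a c b d) x
      = (1 / 4) * (-(pd i (ginv b c) x) * kron d a + pd i (ginv c d) x * kron b a) := by
  have hfun : lamR ginv a c b d
      = fun y => (-(1 / 4) * kron d a) * ginv b c y + (1 / 4 * kron b a) * ginv c d y :=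
    funext fun y => by unfold lamR; ring
  rw [hfun, pd_linear_combination _ _ (hginvdiff b c) (hginvdiff c d)]
  ring

end LambdaR

theorem covDivLamR_eq_sum_covDeriv {n : ℕ} (ginv : Fin n → Fin n → (Fin n → ℝ) → ℝ)
    (Γ : Fin n → Fin n → Fin n → (Fin n → ℝ) → ℝ) (sg : (Fin n → ℝ) → ℝ) {x : Fin n → ℝ}
    (hginvdiff : ∀ a b, DifferentiableAt ℝ (ginv a b) x) (hsgdiff : DifferentiableAt ℝ sg x)
    (a c b : Fin n) :
    covDivLamR ginv Γ sg a c b x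
      = ∑ d, (covDerivDensity Γ sg d x * lamR ginv a c b d x
          + sg x / 4 * (-covDerivGinv ginv Γ d b c x * kron d a
            + covDerivGinv ginv Γ d c d x * kron b a)) := by
  refine Finset.sum_congr rfl fun d _ => ?_
  rw [pd_mul hsgdiff (differentiableAt_lamR hginvdiff a c b d), pd_lamR hginvdiff]
  simp only [mul_right_comm _ (sg x) (lamR _ _ _ _ _ _), ← Finset.sum_mul, sum_mul_lamR_first,
    sum_mul_lamR_second, sum_mul_lamR_third, sum_mul_lamR_fourth]
  unfold covDerivDensity covDerivGinv
  ring

section Nonmetricity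

variable {n : ℕ} {g ginv : Fin n → Fin n → (Fin n → ℝ) → ℝ}
  (Γ : Fin n → Fin n → Fin n → (Fin n → ℝ) → ℝ)

theorem nonmetQ_comm (hgsym : ∀ a b, g a b = g b a) (a b c : Fin n) (x : Fin n → ℝ) :
    nonmetQ g Γ a b c x = nonmetQ g Γ a c b x := by
  unfold nonmetQ
  rw [hgsym b c, sub_sub, sub_sub, add_comm (∑ d, Γ d a b x * g d c x)]
  congr 2 <;> exact Finset.sum_congr rfl fun d _ => by rw [hgsym]

theorem sum_qDU_eq_qTilUp (hgsym : ∀ a b, g a b = g b a)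
    (hginvsym : ∀ a b, ginv a b = ginv b a) (c : Fin n) (x : Fin n → ℝ) :
    ∑ d, qDU g ginv Γ d c d x = qTilUp g ginv Γ c x := by
  simp only [qDU, qTilUp, qTil, Finset.mul_sum]
  rw [Finset.sum_comm]
  refine Finset.sum_congr rfl fun e _ => ?_
  rw [Finset.sum_comm]
  refine Finset.sum_congr rfl fun f _ => Finset.sum_congr rfl fun d _ => ?_
  rw [hginvsym d f, nonmetQ_comm Γ hgsym]
  ring

end Nonmetricity

theorem covDivLamR_eq_nonmetricity {n : ℕ} {g ginv : Fin n → Fin n → (Fin n → ℝ) → ℝ}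
    (Γ : Fin n → Fin n → Fin n → (Fin n → ℝ) → ℝ) (sg : (Fin n → ℝ) → ℝ) (x : Fin n → ℝ)
    (hgsym : ∀ a b, g a b = g b a) (hginvsym : ∀ a b, ginv a b = ginv b a)
    (hinv : ∀ (a b : Fin n) (y : Fin n → ℝ),
      ∑ c, ginv a c y * g c b y = if a = b then (1 : ℝ) else 0)
    (hgdiff : ∀ a b, DifferentiableAt ℝ (g a b) x)
    (hginvdiff : ∀ a b, DifferentiableAt ℝ (ginv a b) x) (hsgdiff : DifferentiableAt ℝ sg x)
    (hsg : ∀ d, pd d sg x = (1 / 2) * sg x * ∑ b, ∑ c, ginv b c x * pd d (g b c) x)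
    (a b c : Fin n) :
    covDivLamR ginv Γ sg a c b x
      = sg x / 4 * (qDU g ginv Γ a b c x - (1 / 2) * qTr g ginv Γ a x * ginv b c x
          + ((1 / 2) * qTrUp g ginv Γ c x - qTilUp g ginv Γ c x) * kron b a) := by
  rw [covDivLamR_eq_sum_covDeriv ginv Γ sg hginvdiff hsgdiff, qTrUp,
    ← sum_qDU_eq_qTilUp Γ hgsym hginvsym]
  simp only [covDerivDensity_eq Γ x sg _ hgsym (hinv · · x) (hsg _),
    covDerivGinv_eq_neg_qDU Γ x hginvsym hinv hgdiff hginvdiff]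
  have hsummand : ∀ d, (1 / 2) * sg x * qTr g ginv Γ d x * lamR ginv a c b d x
      + sg x / 4 * (-(-qDU g ginv Γ d b c x) * kron d a + -qDU g ginv Γ d c d x * kron b a)
      = sg x / 4 * (qDU g ginv Γ d b c x - (1 / 2) * qTr g ginv Γ d x * ginv b c x) * kron d a
        + sg x / 4 * ((1 / 2) * (ginv c d x * qTr g ginv Γ d x) - qDU g ginv Γ d c d x)
          * kron b a := fun d => by
    unfold lamR
    ring
  rw [Finset.sum_congr rfl fun d _ => hsummand d, Finset.sum_add_distrib, sum_mul_kron,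
    ← Finset.sum_mul, ← Finset.mul_sum, Finset.sum_sub_distrib, ← Finset.mul_sum]
  ring

theorem lamR_divergence_identity_general {n : ℕ}
    (g ginv : Fin n → Fin n → (Fin n → ℝ) → ℝ)
    (Γ : Fin n → Fin n → Fin n → (Fin n → ℝ) → ℝ)
    (sg : (Fin n → ℝ) → ℝ)
    (hgsym : ∀ a b, g a b = g b a)
    (hginvsym : ∀ a b, ginv a b = ginv b a)
    (hinv : ∀ (a b : Fin n) (x : Fin n → ℝ),
      ∑ c, ginv a c x * g c b x = if a = b then (1 : ℝ) else 0)
    (hgdiff : ∀ a b, Differentiable ℝ (g a b))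
    (hginvdiff : ∀ a b, Differentiable ℝ (ginv a b))
    (hsgdiff : Differentiable ℝ sg)
    (hsgpos : ∀ x, 0 < sg x)
    (hsg : ∀ (d : Fin n) (x : Fin n → ℝ),
      pd d sg x = (1 / 2) * sg x * ∑ b, ∑ c, ginv b c x * pd d (g b c) x) :
    (∀ (a c b d : Fin n) (x : Fin n → ℝ), lamR ginv a c b d x = -lamR ginv a c d b x)
    ∧ (∀ (a b c : Fin n) (x : Fin n → ℝ),
        4 * (sg x)⁻¹ * covDivLamR ginv Γ sg a c b x
          = qDU g ginv Γ a b c x - (1 / 2) * qTr g ginv Γ a x * ginv b c x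
            + ((1 / 2) * qTrUp g ginv Γ c x - qTilUp g ginv Γ c x) * kron b a) := by
  refine ⟨fun a c b d x => lamR_antisymm x hginvsym a c b d, fun a b c x => ?_⟩
  rw [covDivLamR_eq_nonmetricity Γ sg x hgsym hginvsym hinv
    (fun a b => (hgdiff a b).differentiableAt) (fun a b => (hginvdiff a b).differentiableAt)
    hsgdiff.differentiableAt (hsg · x)]
  field_simp [(hsgpos x).ne']

/-- **The Lagrange multiplier solution in STEGR**: the tensor
`Λ_{Ra}{}^{cbd} = ¼(−g^{bc}δ^d_a + g^{cd}δ^b_a)` is antisymmetric in its last two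
indices `b, d`, and for a torsion-free, curvature-free connection it satisfies
`4 (1/√(−g)) ∇_d(√(−g) Λ_{Ra}{}^{cbd}) = Q_a{}^{bc} − ½ Q_a g^{bc} + (½Q^c − Q̃^c) δ^b_a`. -/
theorem lamR_divergence_identity {n : ℕ}
    (g ginv : Fin n → Fin n → (Fin n → ℝ) → ℝ)
    (Γ : Fin n → Fin n → Fin n → (Fin n → ℝ) → ℝ)
    (sg : (Fin n → ℝ) → ℝ)
    (hgsym : ∀ a b, g a b = g b a)
    (hginvsym : ∀ a b, ginv a b = ginv b a)
    (hinv : ∀ (a b : Fin n) (x : Fin n → ℝ),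
      ∑ c, ginv a c x * g c b x = if a = b then (1 : ℝ) else 0)
    (hgdiff : ∀ a b, Differentiable ℝ (g a b))
    (hginvdiff : ∀ a b, Differentiable ℝ (ginv a b))
    (hsgdiff : Differentiable ℝ sg)
    (hsgpos : ∀ x, 0 < sg x)
    (hsg : ∀ (d : Fin n) (x : Fin n → ℝ),
      pd d sg x = (1 / 2) * sg x * ∑ b, ∑ c, ginv b c x * pd d (g b c) x)
    (htorsionfree : ∀ a b c x, Γ a b c x = Γ a c b x)
    (hflat : ∀ a b c d x, riem Γ a b c d x = 0) :
    (∀ (a c b d : Fin n) (x : Fin n → ℝ), lamR ginv a c b d x = -lamR ginv a c d b x)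
    ∧ (∀ (a b c : Fin n) (x : Fin n → ℝ),
        4 * (sg x)⁻¹ * covDivLamR ginv Γ sg a c b x
          = qDU g ginv Γ a b c x - (1 / 2) * qTr g ginv Γ a x * ginv b c x
            + ((1 / 2) * qTrUp g ginv Γ c x - qTilUp g ginv Γ c x) * kron b a) :=
  lamR_divergence_identity_general g ginv Γ sg hgsym hginvsym hinv hgdiff hginvdiff hsgdiff hsgpos
    hsg
end
end
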